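/- Diminishing returns: letting V(h) denote the maximum of v(X) over X ⊆ C with |X| ≤ h, the sequence V is concave: V(h) − V(h−1) ≥ V(h+1) − V(h) for h = 2,…,m−1. -/

import Mathlib

noncomputable def val (f t : ℕ → ℝ) (X : Finset ℕ) : ℝ :=
  ∑ j ∈ X, f j * t j * ∏ i ∈ X.filter (fun i => j < i), (1 - f i)

/-!
Let `S` be optimal among portfolios of size `h + 1` and `T` among those of size `h - 1`. It
suffices to find `A`, `B` of size at most `h` with `v(S) + v(T) ≤ v(A) + v(B)`. Let `s` be the
largest element of `S \ T`, so every element of `S` above `s` lies in `T`. If `f s = 1`, nothing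
below `s` contributes to `v(S)`, and `S ∩ [s, ∞) ⊆ {s} ∪ T` already has size at most `h`.
Otherwise move `s` from `S` to `T`: the gain of adding `s` to a portfolio is
`f s * Pr(nothing above s pays) * (t s - value of the part below s)`. Optimality of `S` against
`T ∪ {s}`, together with the fact that the elements of `T` above `s` (a superset of those of `S`)
pay at least `t s`, shows that this gain is at least as large for `T` as for `S \ {s}`.
-/

open Finset hiding val

section

variable {f t : ℕ → ℝ}

lemma val_union_of_forall_lt {L U : Finset ℕ} (h : ∀ l ∈ L, ∀ u ∈ U, l < u) :
    val f t (L ∪ U) = val f t U + (∏ i ∈ U, (1 - f i)) * val f t L := by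
  have hdisj : Disjoint L U := disjoint_left.2 fun a haL haU => lt_irrefl a (h a haL a haU)
  unfold val
  rw [sum_union hdisj, add_comm, mul_sum]
  congr 1
  · refine sum_congr rfl fun j hj => ?_
    have hL : L.filter (j < ·) = ∅ := filter_eq_empty_iff.2 fun l hl => (h l hl j hj).not_gt
    rw [filter_union, hL, empty_union]
  · refine sum_congr rfl fun j hj => ?_
    rw [filter_union, filter_true_of_mem (h j hj),
      prod_union (hdisj.mono_left (filter_subset _ _))]
    ring

lemma val_insert_of_forall_lt {L : Finset ℕ} {s : ℕ} (h : ∀ l ∈ L, l < s) :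
    val f t (insert s L) = f s * t s + (1 - f s) * val f t L := by
  rw [insert_eq, union_comm, val_union_of_forall_lt (by simpa using h)]
  simp [val, filter_singleton]

lemma filter_le_union_filter_lt (X : Finset ℕ) (s : ℕ) :
    X.filter (· ≤ s) ∪ X.filter (s < ·) = X := by
  ext x
  simp only [mem_union, mem_filter]
  constructor
  · rintro (⟨hx, -⟩ | ⟨hx, -⟩) <;> exact hx
  · intro hx
    exact (le_or_gt x s).imp (⟨hx, ·⟩) (⟨hx, ·⟩)

lemma val_split (X : Finset ℕ) (s : ℕ) :
    val f t X = val f t (X.filter (s < ·)) +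
      (∏ i ∈ X.filter (s < ·), (1 - f i)) * val f t (X.filter (· ≤ s)) := by
  conv_lhs => rw [← filter_le_union_filter_lt X s]
  exact val_union_of_forall_lt fun l hl u hu => (mem_filter.1 hl).2.trans_lt (mem_filter.1 hu).2

lemma val_insert {Y : Finset ℕ} {s : ℕ} (hs : s ∉ Y) :
    val f t (insert s Y) = val f t (Y.filter (s < ·)) +
      (∏ i ∈ Y.filter (s < ·), (1 - f i)) *
        (f s * t s + (1 - f s) * val f t (Y.filter (· ≤ s))) := by
  rw [val_split _ s, filter_insert, filter_insert, if_neg (lt_irrefl s), if_pos le_rfl,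
    val_insert_of_forall_lt]
  intro l hl
  obtain ⟨hlY, hls⟩ := mem_filter.1 hl
  exact hls.lt_of_ne (ne_of_mem_of_not_mem hlY hs)

lemma val_insert_filter_lt_of_eq_one {Y : Finset ℕ} {s : ℕ} (hs : s ∉ Y) (hfs : f s = 1) :
    val f t (insert s (Y.filter (s < ·))) = val f t (insert s Y) := by
  rw [val_insert hs, val_insert (by simp), filter_filter, filter_filter]
  simp [hfs]

lemma val_add_prod_mul_le {W : Finset ℕ} {c c' : ℝ} (hf : ∀ j ∈ W, 0 ≤ f j ∧ f j ≤ 1)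
    (ht : ∀ j ∈ W, t j ≤ c) (hc : c' ≤ c) :
    val f t W + (∏ i ∈ W, (1 - f i)) * c' ≤ c := by
  induction W using Finset.induction_on_max with
  | empty => simpa [val] using hc
  | insert a W ha ih =>
    have haW : a ∉ W := fun h => lt_irrefl a (ha a h)
    obtain ⟨hfa0, hfa1⟩ := hf a (mem_insert_self a W)
    have hW := ih (fun j hj => hf j (mem_insert_of_mem hj)) fun j hj => ht j (mem_insert_of_mem hj)
    rw [val_insert_of_forall_lt ha, prod_insert haW]
    linear_combination mul_le_mul_of_nonneg_left (ht a (mem_insert_self a W)) hfa0 +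
      mul_le_mul_of_nonneg_left hW (sub_nonneg.2 hfa1)

lemma val_add_prod_mul_le_val_insert {Y : Finset ℕ} {s e : ℕ} (hmono : Monotone t)
    (hf : ∀ j ∈ insert e Y, 0 ≤ f j ∧ f j ≤ 1) (hse : s ≤ e) (he : e ∉ Y) :
    val f t Y + (∏ i ∈ Y, (1 - f i)) * (f e * t s) ≤ val f t (insert e Y) := by
  have hfY : ∀ j ∈ Y, 0 ≤ f j ∧ f j ≤ 1 := fun j hj => hf j (mem_insert_of_mem hj)
  have hfe := (hf e (mem_insert_self e Y)).1
  have hprod : 0 ≤ ∏ i ∈ Y.filter (e < ·), (1 - f i) :=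
    prod_nonneg fun i hi => sub_nonneg.2 (hfY i (mem_filter.1 hi).1).2
  have hlow : val f t (Y.filter (· ≤ e)) + (∏ i ∈ Y.filter (· ≤ e), (1 - f i)) * t s ≤ t e :=
    val_add_prod_mul_le (fun j hj => hfY j (mem_filter.1 hj).1)
      (fun j hj => hmono (mem_filter.1 hj).2) (hmono hse)
  rw [val_insert he, val_split Y e, ← prod_filter_mul_prod_filter_not Y (e < ·)]
  simp only [not_lt]
  linear_combination mul_le_mul_of_nonneg_left hlow (mul_nonneg hprod hfe)

lemma val_add_le_val_union {P D : Finset ℕ} {s : ℕ} (hmono : Monotone t)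
    (hf : ∀ j ∈ P ∪ D, 0 ≤ f j ∧ f j ≤ 1) (hD : ∀ x ∈ D, s ≤ x) (hPD : Disjoint P D) :
    val f t P + ((∏ i ∈ P, (1 - f i)) - ∏ i ∈ P ∪ D, (1 - f i)) * t s ≤ val f t (P ∪ D) := by
  induction D using Finset.induction_on with
  | empty => simp
  | insert a D ha ih =>
    obtain ⟨haP, hPD⟩ := disjoint_insert_right.1 hPD
    have haPD : a ∉ P ∪ D := by simp [haP, ha]
    rw [union_insert] at hf ⊢
    have hIH := ih (fun j hj => hf j (mem_insert_of_mem hj))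
      (fun x hx => hD x (mem_insert_of_mem hx)) hPD
    rw [prod_insert haPD]
    linear_combination hIH + val_add_prod_mul_le_val_insert hmono hf (hD a (mem_insert_self a D)) haPD

lemma val_insert_add_val_le {A T : Finset ℕ} {s : ℕ} (hmono : Monotone t)
    (hfT : ∀ j ∈ T, 0 ≤ f j ∧ f j ≤ 1) (hfs0 : 0 ≤ f s) (hfs1 : f s < 1)
    (hA : s ∉ A) (hT : s ∉ T) (hAT : A.filter (s < ·) ⊆ T)
    (hopt : val f t (insert s T) ≤ val f t (insert s A)) :
    val f t (insert s A) + val f t T ≤ val f t A + val f t (insert s T) := by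
  set P := A.filter (s < ·)
  set Q := T.filter (s < ·)
  have hPQ : P ⊆ Q := fun x hx => mem_filter.2 ⟨hAT hx, (mem_filter.1 hx).2⟩
  have hQ : val f t P + ((∏ i ∈ P, (1 - f i)) - ∏ i ∈ Q, (1 - f i)) * t s ≤ val f t Q := by
    have := val_add_le_val_union (D := Q \ P) (s := s) hmono
      (by rw [union_sdiff_of_subset hPQ]; exact fun j hj => hfT j (mem_filter.1 hj).1)
      (fun x hx => (mem_filter.1 (mem_sdiff.1 hx).1).2.le) disjoint_sdiff
    rwa [union_sdiff_of_subset hPQ] at this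
  rw [val_insert hA, val_insert hT] at hopt ⊢
  rw [val_split A s, val_split T s]
  have key : (1 - f s) * (((∏ i ∈ P, (1 - f i)) - ∏ i ∈ Q, (1 - f i)) * t s +
        (∏ i ∈ Q, (1 - f i)) * val f t (T.filter (· ≤ s))) ≤
      (1 - f s) * ((∏ i ∈ P, (1 - f i)) * val f t (A.filter (· ≤ s))) := by
    linear_combination hopt + hQ
  linear_combination mul_le_mul_of_nonneg_left (le_of_mul_le_mul_left key (sub_pos.2 hfs1)) hfs0

lemma exists_mem_sdiff_forall_lt_mem {α : Type*} [LinearOrder α] {S T : Finset α}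
    (h : ¬ S ⊆ T) : ∃ s ∈ S, s ∉ T ∧ ∀ x ∈ S, s < x → x ∈ T := by
  obtain ⟨s, hs, hmax⟩ := (S \ T).exists_max_image id (sdiff_nonempty.2 h)
  refine ⟨s, (mem_sdiff.1 hs).1, (mem_sdiff.1 hs).2, fun x hx hsx => ?_⟩
  by_contra hxT
  exact (hmax x (mem_sdiff.2 ⟨hx, hxT⟩)).not_gt hsx

lemma exists_exchange {S T : Finset ℕ} (hmono : Monotone t)
    (hf : ∀ j ∈ S ∪ T, 0 ≤ f j ∧ f j ≤ 1) (hcard : T.card + 2 ≤ S.card)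
    (hopt : ∀ X ⊆ S ∪ T, X.card ≤ S.card → val f t X ≤ val f t S) :
    ∃ A ⊆ S ∪ T, ∃ B ⊆ S ∪ T, A.card < S.card ∧ B.card ≤ T.card + 1 ∧
      val f t S + val f t T ≤ val f t A + val f t B := by
  obtain ⟨s, hsS, hsT, habove⟩ := exists_mem_sdiff_forall_lt_mem (S := S) (T := T) fun h => by
    have := card_le_card h
    omega
  obtain ⟨A, hsA, rfl⟩ : ∃ A, s ∉ A ∧ S = insert s A :=
    ⟨S.erase s, notMem_erase s S, (insert_erase hsS).symm⟩
  have hAT : A.filter (s < ·) ⊆ T := fun x hx =>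
    habove x (mem_insert_of_mem (mem_filter.1 hx).1) (mem_filter.1 hx).2
  by_cases hfs : f s = 1
  · refine ⟨insert s (A.filter (s < ·)), ?_, T, subset_union_right, ?_, Nat.le_succ _, ?_⟩
    · exact (insert_subset_insert s (filter_subset _ _)).trans subset_union_left
    · have := card_le_card hAT
      have := card_insert_le s (A.filter (s < ·))
      omega
    · rw [val_insert_filter_lt_of_eq_one hsA hfs]
  · have hsub : insert s T ⊆ insert s A ∪ T :=
      insert_subset (mem_union_left _ (mem_insert_self s A)) subset_union_right
    obtain ⟨hfs0, hfs1⟩ := hf s (mem_union_left _ (mem_insert_self s A))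
    refine ⟨A, (subset_insert s A).trans subset_union_left, insert s T, hsub,
      by simp [card_insert_of_notMem hsA], card_insert_le s T, ?_⟩
    refine val_insert_add_val_le hmono (fun j hj => hf j (mem_union_right _ hj)) hfs0
      (hfs1.lt_of_ne hfs) hsA hsT hAT (hopt _ hsub ?_)
    have := card_insert_le s T
    omega

end

theorem stmt_13_general (m : ℕ) (f t : ℕ → ℝ) (V : ℕ → ℝ)
    (hf : ∀ j ∈ Finset.Icc 1 m, 0 < f j ∧ f j ≤ 1)
    (hmono : Monotone t)
    (hV : ∀ h, IsGreatest {v | ∃ X ⊆ Finset.Icc 1 m, X.card ≤ h ∧ val f t X = v} (V h)) :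
    ∀ h, 2 ≤ h → h + 1 ≤ m → V (h + 1) - V h ≤ V h - V (h - 1) := by
  intro h hh _
  obtain ⟨S, hS, hScard, hSval⟩ := (hV (h + 1)).1
  obtain ⟨T, hT, hTcard, hTval⟩ := (hV (h - 1)).1
  have hle : ∀ X ⊆ Icc 1 m, X.card ≤ h → val f t X ≤ V h := fun X hX hXcard =>
    (hV h).2 ⟨X, hX, hXcard, rfl⟩
  have hTV := hle T hT (by omega)
  rcases le_or_gt S.card h with hSh | hSh
  · linarith [hle S hS hSh]
  have hST : S ∪ T ⊆ Icc 1 m := union_subset hS hT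
  obtain ⟨A, hA, B, hB, hAcard, hBcard, hAB⟩ := exists_exchange hmono
    (fun j hj => ⟨(hf j (hST hj)).1.le, (hf j (hST hj)).2⟩) (by omega)
    fun X hX hXcard => hSval ▸ (hV (h + 1)).2 ⟨X, hX.trans hST, by omega, rfl⟩
  linarith [hle A (hA.trans hST) (by omega), hle B (hB.trans hST) (by omega)]

/-- diminishing returns (concavity of the optimal valuation). -/
theorem stmt_13 (m : ℕ) (f t : ℕ → ℝ) (V : ℕ → ℝ)
    (hf : ∀ j ∈ Finset.Icc 1 m, 0 < f j ∧ f j ≤ 1)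
    (ht : ∀ j ∈ Finset.Icc 1 m, 0 ≤ t j) (hmono : Monotone t)
    (hV : ∀ h, IsGreatest {v | ∃ X ⊆ Finset.Icc 1 m, X.card ≤ h ∧ val f t X = v} (V h)) :
    ∀ h, 2 ≤ h → h + 1 ≤ m → V (h + 1) - V h ≤ V h - V (h - 1) :=
  stmt_13_general m f t V hf hmono hV
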